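/- Let $\hat K = (-1,1)^2$ and let $\hat{\bm u} \in Q_{k-1,k} \times Q_{k,k-1}$ (with $k \ge 3$) satisfy: (i) the tangential component $\hat{\bm u}\cdot\hat{\bm\tau}$ vanishes on all four edges of $\hat K$; (ii) $\hat\nabla\times\hat{\bm u} = 0$ on $\partial\hat K$; (iii) $\int_{\hat K}\hat{\bm u}\cdot\hat\nabla\times\hat\varphi\, dV = 0$ for all $\hat\varphi \in \tilde Q_{k-3}(\hat K)$; and (iv) $\int_{\hat K}\hat{\bm u}\cdot\hat{\bm q}\, dV = 0$ for all $\hat{\bm q} \in Q_{k-2}(\hat K)\cdot\hat{\bm x}$. Then $\hat{\bm u} = 0$ (unisolvence of the rectangular $H^2(\mathrm{curl})$-conforming element). -/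

import Mathlib

/-!
The curl `c = ∂₁û₂ - ∂₂û₁` lies in `Q_{k-1}` and vanishes on `∂K̂`, so `c = b w` with the bubble
`b = (x² - 1)(y² - 1)` and `w ∈ Q_{k-3}`. Integrating by parts, the boundary terms vanish by (i),
so (iii) says `∫ c φ = 0` for every `φ ∈ Q_{k-3}` (constants have zero curl). Taking `φ = w` gives
`∫ b w² = 0`; as `b ≥ 0` on `K̂`, `w = 0`. Hence `û = ∇p` with `p ∈ Q_k`, and by (i) `p` is constant
on `∂K̂`, w.l.o.g. zero, so `p = b s` with `s ∈ Q_{k-2}`. Integrating by parts again, (iv) says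
`∫ p ∇·(r x̂) = 0` for `r ∈ Q_{k-2}`, and `r ↦ ∇·(r x̂)` multiplies `x^α y^β` by `α + β + 2`, so it
is onto `Q_{k-2}`. Testing with `s` gives `∫ b s² = 0`, hence `p = 0`.
-/

open MvPolynomial intervalIntegral MeasureTheory

namespace MvPolynomial

section Substitution

variable {σ R : Type*} [DecidableEq σ] [CommRing R]

noncomputable def substX (i : σ) (a : R) : MvPolynomial σ R →ₐ[R] MvPolynomial σ R :=
  aeval (Function.update X i (C a))

@[simp]
lemma substX_X_self (i : σ) (a : R) : substX i a (X i) = C a := by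
  simp [substX]

@[simp]
lemma substX_X_of_ne {i j : σ} (h : j ≠ i) (a : R) : substX i a (X j) = X j := by
  simp [substX, h]

lemma eval_substX (i : σ) (a : R) (v : σ → R) (p : MvPolynomial σ R) :
    eval v (substX i a p) = eval (Function.update v i a) p := by
  induction p using MvPolynomial.induction_on with
  | C c => simp
  | add p q hp hq => simp [hp, hq]
  | mul_X p j hp =>
    by_cases h : j = i
    · subst h; simp [hp]
    · simp [hp, h]

lemma X_sub_C_dvd_sub_substX (i : σ) (a : R) (p : MvPolynomial σ R) :
    X i - C a ∣ p - substX i a p := by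
  induction p using MvPolynomial.induction_on with
  | C c => simp
  | add p q hp hq => simpa [add_sub_add_comm] using dvd_add hp hq
  | mul_X p j hp =>
    by_cases h : j = i
    · subst h
      have : p * X j - substX j a (p * X j) =
          (p - substX j a p) * X j + substX j a p * (X j - C a) := by
        simp only [map_mul, substX_X_self]; ring
      rw [this]
      exact dvd_add (dvd_mul_of_dvd_left hp _) (dvd_mul_left _ _)
    · simpa [h, sub_mul] using dvd_mul_of_dvd_left hp (X j)

lemma X_sub_C_dvd_of_substX_eq_zero {i : σ} {a : R} {p : MvPolynomial σ R}
    (h : substX i a p = 0) : X i - C a ∣ p := by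
  simpa [h] using X_sub_C_dvd_sub_substX i a p

lemma X_sq_sub_one_dvd_of_substX_eq_zero [IsDomain R] [NeZero (2 : R)] {i : σ}
    {p : MvPolynomial σ R} (h₁ : substX i 1 p = 0) (h₂ : substX i (-1) p = 0) :
    X i ^ 2 - 1 ∣ p := by
  obtain ⟨q, rfl⟩ := X_sub_C_dvd_of_substX_eq_zero h₁
  have hq : substX i (-1) q = 0 := by
    simp only [map_mul, map_sub, substX_X_self, map_one, mul_eq_zero] at h₂
    refine h₂.resolve_left ?_
    rw [← C_1, ← map_sub, C_eq_zero, show (-1 - 1 : R) = -2 by ring, neg_eq_zero]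
    exact two_ne_zero
  obtain ⟨r, rfl⟩ := X_sub_C_dvd_of_substX_eq_zero hq
  exact ⟨r, by simp only [C_1, C_neg]; ring⟩

end Substitution

lemma two_le_degreeOf_X_sq_sub_one {σ R : Type*} [CommRing R] [Nontrivial R] (i : σ) :
    2 ≤ degreeOf i (X i ^ 2 - 1 : MvPolynomial σ R) := by
  classical
  refine monomial_le_degreeOf i (m := Finsupp.single i 2) ?_ |>.trans_eq' (by simp)
  rw [mem_support_iff, coeff_sub, coeff_X_pow, coeff_one, if_pos rfl,
    if_neg (Finsupp.single_ne_zero.2 two_ne_zero).symm, sub_zero]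
  exact one_ne_zero

section PartialDerivative

variable {σ R : Type*} [CommSemiring R]

lemma add_single_mem_support_of_mem_support_pderiv {i : σ} {p : MvPolynomial σ R}
    {m : σ →₀ ℕ} (hm : m ∈ (pderiv i p).support) :
    m + Finsupp.single i 1 ∈ p.support := by
  rw [mem_support_iff, coeff_pderiv] at hm
  exact mem_support_iff.2 (left_ne_zero_of_mul hm)

lemma degreeOf_pderiv_le (i j : σ) (p : MvPolynomial σ R) :
    degreeOf j (pderiv i p) ≤ degreeOf j p :=
  degreeOf_le_iff.2 fun m hm =>
    (le_self_add : m j ≤ m j + _).trans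
      (monomial_le_degreeOf j (add_single_mem_support_of_mem_support_pderiv hm))

lemma degreeOf_pderiv_self_le (i : σ) (p : MvPolynomial σ R) :
    degreeOf i (pderiv i p) ≤ degreeOf i p - 1 :=
  degreeOf_le_iff.2 fun m hm => by
    classical
    have := monomial_le_degreeOf i (add_single_mem_support_of_mem_support_pderiv hm)
    simp only [Finsupp.coe_add, Pi.add_apply, Finsupp.single_eq_same] at this
    omega

lemma degreeOf_le_degreeOf_pderiv_add_one [IsDomain R] [CharZero R] (i : σ)
    (p : MvPolynomial σ R) : degreeOf i p ≤ degreeOf i (pderiv i p) + 1 :=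
  degreeOf_le_iff.2 fun m hm => by
    classical
    rcases Nat.eq_zero_or_pos (m i) with h | h
    · omega
    have hm' : m - Finsupp.single i 1 ∈ (pderiv i p).support := by
      have hsub : m - Finsupp.single i 1 + Finsupp.single i 1 = m := by
        ext j; by_cases hj : j = i <;> simp [hj, eq_comm]; omega
      rw [mem_support_iff, coeff_pderiv, hsub]
      exact mul_ne_zero (mem_support_iff.1 hm) (Nat.cast_add_one_ne_zero _)
    have := monomial_le_degreeOf i hm'
    simp only [Finsupp.coe_tsub, Pi.sub_apply, Finsupp.single_eq_same] at this
    omega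

end PartialDerivative

section Antiderivative

variable {σ K : Type*} [Field K]

noncomputable def integ (i : σ) : MvPolynomial σ K →ₗ[K] MvPolynomial σ K :=
  (basisMonomials σ K).constr K fun d =>
    monomial (d + Finsupp.single i 1) ((d i + 1 : K)⁻¹)

lemma integ_monomial (i : σ) (d : σ →₀ ℕ) (c : K) :
    integ i (monomial d c) = monomial (d + Finsupp.single i 1) (c / (d i + 1)) := by
  have : monomial d c = c • (basisMonomials σ K) d := by
    simp [coe_basisMonomials, smul_monomial]
  rw [this, map_smul, integ, Module.Basis.constr_basis, smul_monomial, div_eq_mul_inv,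
    smul_eq_mul]

lemma pderiv_integ [CharZero K] (i : σ) (p : MvPolynomial σ K) :
    pderiv i (integ i p) = p := by
  induction p using MvPolynomial.induction_on' with
  | monomial d c =>
    simp [integ_monomial, pderiv_monomial,
      div_mul_cancel₀ _ (Nat.cast_add_one_ne_zero (R := K) (d i))]
  | add p q hp hq => simp [hp, hq]

lemma pderiv_integ_of_ne {i j : σ} (h : i ≠ j) (p : MvPolynomial σ K) :
    pderiv j (integ i p) = integ i (pderiv j p) := by
  induction p using MvPolynomial.induction_on' with
  | monomial d c =>
    have hsub : d + Finsupp.single i 1 - Finsupp.single j 1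
        = d - Finsupp.single j 1 + Finsupp.single i 1 := by
      ext l; by_cases hl : l = i <;> by_cases hl' : l = j <;> simp_all
    rw [integ_monomial, pderiv_monomial, pderiv_monomial, integ_monomial, hsub]
    simp [h, h.symm, div_mul_eq_mul_div]
  | add p q hp hq => simp [hp, hq]

lemma exists_pderiv_eq_of_pderiv_eq [CharZero K] {i j : σ} (hij : i ≠ j)
    {u v : MvPolynomial σ K} (h : pderiv i v = pderiv j u) :
    ∃ p, pderiv i p = u ∧ pderiv j p = v := by
  refine ⟨integ i u + integ j (v - pderiv j (integ i u)), ?_, ?_⟩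
  · rw [map_add, pderiv_integ, pderiv_integ_of_ne hij.symm, map_sub, pderiv_integ_of_ne hij,
      pderiv_integ, h, sub_self, map_zero, add_zero]
  · rw [map_add, pderiv_integ, add_sub_cancel]

end Antiderivative

section RadialDivergence

variable {σ K : Type*} [Fintype σ] [Field K]

noncomputable def divRadial : MvPolynomial σ K →ₗ[K] MvPolynomial σ K :=
  ∑ i, (pderiv i).toLinearMap ∘ₗ LinearMap.mulLeft K (X i)

lemma divRadial_apply (r : MvPolynomial σ K) : divRadial r = ∑ i, pderiv i (X i * r) := by
  simp [divRadial]

omit [Fintype σ] in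
lemma pderiv_X_mul_monomial (i : σ) (d : σ →₀ ℕ) (c : K) :
    pderiv i (X i * monomial d c) = monomial d (c * ((d i : K) + 1)) := by
  classical
  rw [← pow_one (X i), ← monomial_single_add, pderiv_monomial, add_tsub_cancel_left]
  simp [add_comm]

lemma divRadial_monomial (d : σ →₀ ℕ) (c : K) :
    divRadial (monomial d c) = monomial d (c * ∑ i, ((d i : K) + 1)) := by
  simp only [divRadial_apply, pderiv_X_mul_monomial, Finset.mul_sum, map_sum]

lemma exists_divRadial_eq [Nonempty σ] [CharZero K] (s : MvPolynomial σ K) :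
    ∃ r, divRadial r = s ∧ ∀ i, degreeOf i r ≤ degreeOf i s := by
  classical
  have hne (d : σ →₀ ℕ) : ∑ i, ((d i : K) + 1) ≠ 0 := by
    have : ∑ i, (d i + 1) ≠ 0 :=
      (Finset.sum_pos (fun _ _ => Nat.succ_pos _) Finset.univ_nonempty).ne'
    exact_mod_cast this
  refine ⟨∑ d ∈ s.support, monomial d (coeff d s / ∑ i, ((d i : K) + 1)), ?_, fun i => ?_⟩
  · simp only [map_sum, divRadial_monomial, div_mul_cancel₀ _ (hne _)]
    exact s.support_sum_monomial_coeff
  · refine degreeOf_le_iff.2 fun m hm => monomial_le_degreeOf i ?_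
    contrapose! hm
    simp_all [coeff_sum, coeff_monomial]

end RadialDivergence

lemma hasDerivAt_eval_update {σ 𝕜 : Type*} [DecidableEq σ] [NontriviallyNormedField 𝕜]
    (p : MvPolynomial σ 𝕜) (v : σ → 𝕜) (i : σ) (t : 𝕜) :
    HasDerivAt (fun s => eval (Function.update v i s) p)
      (eval (Function.update v i t) (pderiv i p)) t := by
  induction p using MvPolynomial.induction_on with
  | C c => simpa using hasDerivAt_const t c
  | add p q hp hq => simpa only [map_add] using hp.fun_add hq
  | mul_X p j hp =>
    by_cases hj : j = i
    · subst hj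
      simpa [pderiv_mul, add_comm, mul_comm] using hp.fun_mul (hasDerivAt_id' t)
    · simpa [pderiv_mul, hj, pderiv_X_of_ne hj, mul_comm] using hp.mul_const (v j)

end MvPolynomial

lemma eqOn_Ioc_of_intervalIntegral_eq_zero {f : ℝ → ℝ} {a b : ℝ} (hab : a ≤ b)
    (hf : Continuous f) (hnn : ∀ x ∈ Set.Icc a b, 0 ≤ f x) (h : ∫ x in a..b, f x = 0) :
    Set.EqOn f 0 (Set.Ioc a b) :=
  have hnn' : 0 ≤ᵐ[volume.restrict (Set.Ioc a b)] f :=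
    ae_restrict_of_forall_mem measurableSet_Ioc fun x hx => hnn x (Set.Ioc_subset_Icc_self hx)
  Measure.eqOn_Ioc_of_ae_eq volume
    ((integral_eq_zero_iff_of_le_of_nonneg_ae hab hnn' (hf.intervalIntegrable a b)).1 h)
    hf.continuousOn continuousOn_const

namespace RefSquare

lemma update_vec_zero {α : Type*} (x y a : α) : Function.update ![x, y] 0 a = ![a, y] := by
  ext i; fin_cases i <;> simp

lemma update_vec_one {α : Type*} (x y a : α) : Function.update ![x, y] 1 a = ![x, a] := by
  ext i; fin_cases i <;> simp

@[simp]
lemma eval_substX_zero (x y a : ℝ) (p : MvPolynomial (Fin 2) ℝ) :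
    eval ![x, y] (substX 0 a p) = eval ![a, y] p := by
  rw [eval_substX, update_vec_zero]

@[simp]
lemma eval_substX_one (x y a : ℝ) (p : MvPolynomial (Fin 2) ℝ) :
    eval ![x, y] (substX 1 a p) = eval ![x, a] p := by
  rw [eval_substX, update_vec_one]

lemma eq_zero_of_eval_eq_zero {s : Set ℝ} (hs : s.Infinite) {p : MvPolynomial (Fin 2) ℝ}
    (h : ∀ x ∈ s, ∀ y ∈ s, eval ![x, y] p = 0) : p = 0 :=
  funext_set (fun _ => s) (fun _ => hs) fun v hv => by
    rw [show v = ![v 0, v 1] from funext fun i => by fin_cases i <;> rfl, map_zero]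
    exact h _ (hv 0 trivial) _ (hv 1 trivial)

lemma substX_zero_eq_zero {s : Set ℝ} (hs : s.Infinite) {a : ℝ} {p : MvPolynomial (Fin 2) ℝ}
    (h : ∀ t ∈ s, eval ![a, t] p = 0) : substX 0 a p = 0 :=
  eq_zero_of_eval_eq_zero hs fun _ _ y hy => by simpa using h y hy

lemma substX_one_eq_zero {s : Set ℝ} (hs : s.Infinite) {a : ℝ} {p : MvPolynomial (Fin 2) ℝ}
    (h : ∀ t ∈ s, eval ![t, a] p = 0) : substX 1 a p = 0 :=
  eq_zero_of_eval_eq_zero hs fun x hx _ _ => by simpa using h x hx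

lemma hasDerivAt_eval_fst (p : MvPolynomial (Fin 2) ℝ) (x y : ℝ) :
    HasDerivAt (fun t => eval ![t, y] p) (eval ![x, y] (pderiv 0 p)) x := by
  simpa [update_vec_zero] using hasDerivAt_eval_update p ![x, y] 0 x

lemma hasDerivAt_eval_snd (p : MvPolynomial (Fin 2) ℝ) (x y : ℝ) :
    HasDerivAt (fun t => eval ![x, t] p) (eval ![x, y] (pderiv 1 p)) y := by
  simpa [update_vec_one] using hasDerivAt_eval_update p ![x, y] 1 y

lemma continuous_eval_vec (p : MvPolynomial (Fin 2) ℝ) :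
    Continuous fun z : ℝ × ℝ => eval ![z.1, z.2] p :=
  (continuous_eval p).comp (by fun_prop)

lemma continuous_eval_fst (p : MvPolynomial (Fin 2) ℝ) (y : ℝ) :
    Continuous fun x => eval ![x, y] p :=
  (continuous_eval p).comp (by fun_prop)

lemma continuous_eval_snd (p : MvPolynomial (Fin 2) ℝ) (x : ℝ) :
    Continuous fun y => eval ![x, y] p :=
  (continuous_eval p).comp (by fun_prop)

lemma continuous_integral_eval_snd (p : MvPolynomial (Fin 2) ℝ) (a b : ℝ) :
    Continuous fun x => ∫ y in a..b, eval ![x, y] p :=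
  continuous_parametric_intervalIntegral_of_continuous' (continuous_eval_vec p) a b

noncomputable def squareIntegral : MvPolynomial (Fin 2) ℝ →ₗ[ℝ] ℝ where
  toFun p := ∫ x in (-1 : ℝ)..1, ∫ y in (-1 : ℝ)..1, eval ![x, y] p
  map_add' p q := by
    simp only [map_add]
    rw [← integral_add ((continuous_integral_eval_snd p _ _).intervalIntegrable _ _)
      ((continuous_integral_eval_snd q _ _).intervalIntegrable _ _)]
    congr 1 with x
    exact integral_add ((continuous_eval_snd p x).intervalIntegrable _ _)
      ((continuous_eval_snd q x).intervalIntegrable _ _)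
  map_smul' c p := by
    simp only [smul_eval, RingHom.id_apply, smul_eq_mul, intervalIntegral.integral_const_mul]

lemma squareIntegral_apply (p : MvPolynomial (Fin 2) ℝ) :
    squareIntegral p = ∫ x in (-1 : ℝ)..1, ∫ y in (-1 : ℝ)..1, eval ![x, y] p := rfl

lemma squareIntegral_eq_integral_integral_swap (p : MvPolynomial (Fin 2) ℝ) :
    squareIntegral p = ∫ y in (-1 : ℝ)..1, ∫ x in (-1 : ℝ)..1, eval ![x, y] p := by
  have hle : (-1 : ℝ) ≤ 1 := by norm_num
  simp only [squareIntegral_apply, integral_of_le hle]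
  refine integral_integral_swap ?_
  rw [Measure.prod_restrict, ← Measure.volume_eq_prod]
  exact ((continuous_eval_vec p).continuousOn.integrableOn_compact
    (isCompact_Icc.prod isCompact_Icc)).mono_set
    (Set.prod_mono Set.Ioc_subset_Icc_self Set.Ioc_subset_Icc_self)

lemma integral_eval_pderiv_zero (p : MvPolynomial (Fin 2) ℝ) (y a b : ℝ) :
    ∫ x in a..b, eval ![x, y] (pderiv 0 p) = eval ![b, y] p - eval ![a, y] p :=
  integral_eq_sub_of_hasDerivAt (fun x _ => hasDerivAt_eval_fst p x y)
    ((continuous_eval_fst _ y).intervalIntegrable a b)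

lemma integral_eval_pderiv_one (p : MvPolynomial (Fin 2) ℝ) (x a b : ℝ) :
    ∫ y in a..b, eval ![x, y] (pderiv 1 p) = eval ![x, b] p - eval ![x, a] p :=
  integral_eq_sub_of_hasDerivAt (fun y _ => hasDerivAt_eval_snd p x y)
    ((continuous_eval_snd _ x).intervalIntegrable a b)

/-- Vanishing on the whole lines `xᵢ = ±1`, which for a polynomial is the same as vanishing on the
two edges of `K̂` they contain. -/
def VanishesOnEdges (i : Fin 2) (p : MvPolynomial (Fin 2) ℝ) : Prop :=
  substX i 1 p = 0 ∧ substX i (-1) p = 0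

def VanishesOnBoundary (p : MvPolynomial (Fin 2) ℝ) : Prop := ∀ i, VanishesOnEdges i p

lemma VanishesOnEdges.mul_right {i : Fin 2} {p : MvPolynomial (Fin 2) ℝ}
    (hp : VanishesOnEdges i p) (q : MvPolynomial (Fin 2) ℝ) : VanishesOnEdges i (p * q) := by
  simp [VanishesOnEdges, hp.1, hp.2]

lemma vanishesOnEdges_zero_of_forall_Icc {p : MvPolynomial (Fin 2) ℝ}
    (h : ∀ t ∈ Set.Icc (-1 : ℝ) 1, eval ![-1, t] p = 0 ∧ eval ![1, t] p = 0) :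
    VanishesOnEdges 0 p :=
  ⟨substX_zero_eq_zero (Set.Icc_infinite (by norm_num)) fun t ht => (h t ht).2,
    substX_zero_eq_zero (Set.Icc_infinite (by norm_num)) fun t ht => (h t ht).1⟩

lemma vanishesOnEdges_one_of_forall_Icc {p : MvPolynomial (Fin 2) ℝ}
    (h : ∀ t ∈ Set.Icc (-1 : ℝ) 1, eval ![t, -1] p = 0 ∧ eval ![t, 1] p = 0) :
    VanishesOnEdges 1 p :=
  ⟨substX_one_eq_zero (Set.Icc_infinite (by norm_num)) fun t ht => (h t ht).2,
    substX_one_eq_zero (Set.Icc_infinite (by norm_num)) fun t ht => (h t ht).1⟩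

lemma vanishesOnBoundary_of_forall_Icc {p : MvPolynomial (Fin 2) ℝ}
    (h : ∀ t ∈ Set.Icc (-1 : ℝ) 1, eval ![-1, t] p = 0 ∧ eval ![1, t] p = 0 ∧
      eval ![t, -1] p = 0 ∧ eval ![t, 1] p = 0) :
    VanishesOnBoundary p := fun i => by
  fin_cases i
  · exact vanishesOnEdges_zero_of_forall_Icc fun t ht => ⟨(h t ht).1, (h t ht).2.1⟩
  · exact vanishesOnEdges_one_of_forall_Icc fun t ht => (h t ht).2.2

lemma squareIntegral_pderiv_eq_zero {i : Fin 2} {p : MvPolynomial (Fin 2) ℝ}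
    (hp : VanishesOnEdges i p) : squareIntegral (pderiv i p) = 0 := by
  obtain ⟨h₁, h₂⟩ := hp
  fin_cases i
  · have h₁ (y : ℝ) : eval ![1, y] p = 0 := by simpa using congr_arg (eval ![0, y]) h₁
    have h₂ (y : ℝ) : eval ![-1, y] p = 0 := by simpa using congr_arg (eval ![0, y]) h₂
    simp [squareIntegral_eq_integral_integral_swap, integral_eval_pderiv_zero, h₁, h₂]
  · have h₁ (x : ℝ) : eval ![x, 1] p = 0 := by simpa using congr_arg (eval ![x, 0]) h₁
    have h₂ (x : ℝ) : eval ![x, -1] p = 0 := by simpa using congr_arg (eval ![x, 0]) h₂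
    simp [squareIntegral_apply, integral_eval_pderiv_one, h₁, h₂]

lemma squareIntegral_curl_mul {u₁ u₂ : MvPolynomial (Fin 2) ℝ} (h₁ : VanishesOnEdges 1 u₁)
    (h₂ : VanishesOnEdges 0 u₂) (φ : MvPolynomial (Fin 2) ℝ) :
    squareIntegral ((pderiv 0 u₂ - pderiv 1 u₁) * φ) =
      squareIntegral (u₁ * pderiv 1 φ - u₂ * pderiv 0 φ) := by
  have : (pderiv 0 u₂ - pderiv 1 u₁) * φ =
      pderiv 0 (u₂ * φ) - pderiv 1 (u₁ * φ) + (u₁ * pderiv 1 φ - u₂ * pderiv 0 φ) := by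
    simp only [pderiv_mul]; ring
  rw [this, map_add, map_sub, squareIntegral_pderiv_eq_zero (h₂.mul_right φ),
    squareIntegral_pderiv_eq_zero (h₁.mul_right φ), sub_zero, zero_add]

lemma squareIntegral_pderiv_mul_X {q : MvPolynomial (Fin 2) ℝ} (hq : VanishesOnBoundary q)
    (r : MvPolynomial (Fin 2) ℝ) :
    squareIntegral (pderiv 0 q * (X 0 * r) + pderiv 1 q * (X 1 * r)) =
      -squareIntegral (q * divRadial r) := by
  have : pderiv 0 q * (X 0 * r) + pderiv 1 q * (X 1 * r) =
      pderiv 0 (q * (X 0 * r)) + pderiv 1 (q * (X 1 * r)) - q * divRadial r := by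
    rw [divRadial_apply, Fin.sum_univ_two, pderiv_mul (f := q), pderiv_mul (f := q)]; ring
  rw [this, map_sub, map_add, squareIntegral_pderiv_eq_zero ((hq 0).mul_right _),
    squareIntegral_pderiv_eq_zero ((hq 1).mul_right _), zero_add, zero_sub]

noncomputable def bubble : MvPolynomial (Fin 2) ℝ := (X 0 ^ 2 - 1) * (X 1 ^ 2 - 1)

lemma eval_bubble (x y : ℝ) : eval ![x, y] bubble = (x ^ 2 - 1) * (y ^ 2 - 1) := by
  simp [bubble]

lemma eq_zero_of_squareIntegral_bubble_mul_self {w : MvPolynomial (Fin 2) ℝ}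
    (h : squareIntegral (bubble * w * w) = 0) : w = 0 := by
  have hnn (x y : ℝ) (hx : x ∈ Set.Icc (-1 : ℝ) 1) (hy : y ∈ Set.Icc (-1 : ℝ) 1) :
      0 ≤ eval ![x, y] (bubble * w * w) := by
    have hx' : x ^ 2 - 1 ≤ 0 := by nlinarith [hx.1, hx.2]
    have hy' : y ^ 2 - 1 ≤ 0 := by nlinarith [hy.1, hy.2]
    rw [map_mul, map_mul, eval_bubble, mul_assoc]
    exact mul_nonneg (mul_nonneg_of_nonpos_of_nonpos hx' hy') (mul_self_nonneg _)
  have hle : (-1 : ℝ) ≤ 1 := by norm_num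
  rw [squareIntegral_apply] at h
  have houter := eqOn_Ioc_of_intervalIntegral_eq_zero hle (continuous_integral_eval_snd _ _ _)
    (fun x hx => integral_nonneg hle fun y hy => hnn x y hx hy) h
  refine eq_zero_of_eval_eq_zero (Set.Ioo_infinite (by norm_num : (-1 : ℝ) < 1))
    fun x hx y hy => ?_
  have hinner := eqOn_Ioc_of_intervalIntegral_eq_zero hle (continuous_eval_snd _ x)
    (fun y hy => hnn x y (Set.Ioo_subset_Icc_self hx) hy) (houter (Set.Ioo_subset_Ioc_self hx))
    (Set.Ioo_subset_Ioc_self hy)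
  have hx' : x ^ 2 - 1 ≠ 0 := by nlinarith [hx.1, hx.2]
  have hy' : y ^ 2 - 1 ≠ 0 := by nlinarith [hy.1, hy.2]
  simpa [eval_bubble, hx', hy'] using hinner

lemma degreeOf_le_of_degreeOf_bubble_mul_le {w : MvPolynomial (Fin 2) ℝ} {i : Fin 2} {m : ℕ}
    (h : degreeOf i (bubble * w) ≤ m + 2) : degreeOf i w ≤ m := by
  rcases eq_or_ne w 0 with rfl | hw
  · simp
  have hX (j : Fin 2) : (X j ^ 2 - 1 : MvPolynomial (Fin 2) ℝ) ≠ 0 := fun h0 => by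
    have := two_le_degreeOf_X_sq_sub_one (R := ℝ) j
    rw [h0, degreeOf_zero] at this
    omega
  have hb : 2 ≤ degreeOf i bubble := by
    rw [bubble, degreeOf_mul_eq (hX 0) (hX 1)]
    fin_cases i
    · exact (two_le_degreeOf_X_sq_sub_one (R := ℝ) 0).trans (Nat.le_add_right _ _)
    · exact (two_le_degreeOf_X_sq_sub_one (R := ℝ) 1).trans (Nat.le_add_left _ _)
  have hb0 : bubble ≠ 0 := mul_ne_zero (hX 0) (hX 1)
  rw [degreeOf_mul_eq hb0 hw] at h
  omega

lemma bubble_dvd_of_vanishesOnBoundary {p : MvPolynomial (Fin 2) ℝ}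
    (hp : VanishesOnBoundary p) : bubble ∣ p := by
  obtain ⟨q, rfl⟩ := X_sq_sub_one_dvd_of_substX_eq_zero (hp 0).1 (hp 0).2
  have hX : (X 0 ^ 2 - 1 : MvPolynomial (Fin 2) ℝ) ≠ 0 := fun h0 => by
    simpa using congr_arg (eval 0) h0
  have hq (a : ℝ) (ha : substX 1 a ((X 0 ^ 2 - 1) * q) = 0) : substX 1 a q = 0 := by
    simpa [hX, substX_X_of_ne (show (0 : Fin 2) ≠ 1 by decide)] using ha
  obtain ⟨w, rfl⟩ := X_sq_sub_one_dvd_of_substX_eq_zero (hq 1 (hp 1).1) (hq (-1) (hp 1).2)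
  exact ⟨w, by rw [bubble, mul_assoc]⟩

lemma eq_zero_of_moments_eq_zero {c : MvPolynomial (Fin 2) ℝ} {m : ℕ}
    (hc : VanishesOnBoundary c) (h₀ : degreeOf 0 c ≤ m + 2) (h₁ : degreeOf 1 c ≤ m + 2)
    (hmom : ∀ φ, degreeOf 0 φ ≤ m → degreeOf 1 φ ≤ m → squareIntegral (c * φ) = 0) :
    c = 0 := by
  obtain ⟨w, rfl⟩ := bubble_dvd_of_vanishesOnBoundary hc
  have hw : w = 0 := eq_zero_of_squareIntegral_bubble_mul_self <|
    hmom w (degreeOf_le_of_degreeOf_bubble_mul_le h₀) (degreeOf_le_of_degreeOf_bubble_mul_le h₁)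
  rw [hw, mul_zero]

lemma curl_eq_zero_of_moments {k : ℕ} (hk : 3 ≤ k) {u₁ u₂ : MvPolynomial (Fin 2) ℝ}
    (hu₁x : degreeOf 0 u₁ ≤ k - 1) (hu₁y : degreeOf 1 u₁ ≤ k)
    (hu₂x : degreeOf 0 u₂ ≤ k) (hu₂y : degreeOf 1 u₂ ≤ k - 1)
    (hu₁ : VanishesOnEdges 1 u₁) (hu₂ : VanishesOnEdges 0 u₂)
    (hc : VanishesOnBoundary (pderiv 0 u₂ - pderiv 1 u₁))
    (hmom : ∀ φ, degreeOf 0 φ ≤ k - 3 → degreeOf 1 φ ≤ k - 3 → coeff 0 φ = 0 →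
      squareIntegral (u₁ * pderiv 1 φ - u₂ * pderiv 0 φ) = 0) :
    pderiv 0 u₂ - pderiv 1 u₁ = 0 := by
  refine eq_zero_of_moments_eq_zero (m := k - 3) hc ?_ ?_ fun φ hφ₀ hφ₁ => ?_
  · have := degreeOf_sub_le 0 (pderiv 0 u₂) (pderiv 1 u₁)
    have := degreeOf_pderiv_self_le 0 u₂
    have := degreeOf_pderiv_le 1 0 u₁
    omega
  · have := degreeOf_sub_le 1 (pderiv 0 u₂) (pderiv 1 u₁)
    have := degreeOf_pderiv_le 0 1 u₂
    have := degreeOf_pderiv_self_le 1 u₁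
    omega
  · have hψ := hmom (φ - C (coeff 0 φ))
      ((degreeOf_sub_le _ _ _).trans (max_le hφ₀ (by simp)))
      ((degreeOf_sub_le _ _ _).trans (max_le hφ₁ (by simp))) (by simp)
    simpa [squareIntegral_curl_mul hu₁ hu₂] using hψ

lemma exists_potential_vanishesOnBoundary {u₁ u₂ : MvPolynomial (Fin 2) ℝ}
    (hcurl : pderiv 0 u₂ = pderiv 1 u₁) (h₁ : VanishesOnEdges 1 u₁)
    (h₂ : VanishesOnEdges 0 u₂) :
    ∃ q, pderiv 0 q = u₁ ∧ pderiv 1 q = u₂ ∧ VanishesOnBoundary q := by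
  obtain ⟨p, hp₀, hp₁⟩ := exists_pderiv_eq_of_pderiv_eq zero_ne_one hcurl
  have hx {a : ℝ} (ha : substX 1 a u₁ = 0) (s t : ℝ) : eval ![s, a] p = eval ![t, a] p :=
    is_const_of_deriv_eq_zero (fun x => (hasDerivAt_eval_fst p x a).differentiableAt)
      (fun x => by
        rw [(hasDerivAt_eval_fst p x a).deriv, hp₀]
        simpa using congr_arg (eval ![x, 0]) ha) s t
  have hy {a : ℝ} (ha : substX 0 a u₂ = 0) (s t : ℝ) : eval ![a, s] p = eval ![a, t] p :=
    is_const_of_deriv_eq_zero (fun y => (hasDerivAt_eval_snd p a y).differentiableAt)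
      (fun y => by
        rw [(hasDerivAt_eval_snd p a y).deriv, hp₁]
        simpa using congr_arg (eval ![0, y]) ha) s t
  refine ⟨p - C (eval ![1, 1] p), by simp [hp₀], by simp [hp₁], fun i => ?_⟩
  fin_cases i
  · refine ⟨substX_zero_eq_zero Set.infinite_univ fun t _ => ?_,
      substX_zero_eq_zero Set.infinite_univ fun t _ => ?_⟩ <;>
      simp only [map_sub, eval_C, sub_eq_zero]
    · exact hy h₂.1 t 1
    · exact (hy h₂.2 t 1).trans (hx h₁.1 (-1) 1)
  · refine ⟨substX_one_eq_zero Set.infinite_univ fun t _ => ?_,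
      substX_one_eq_zero Set.infinite_univ fun t _ => ?_⟩ <;>
      simp only [map_sub, eval_C, sub_eq_zero]
    · exact hx h₁.1 t 1
    · exact (hx h₁.2 t 1).trans (hy h₂.1 (-1) 1)

lemma eq_zero_of_gradient_moments {k : ℕ} (hk : 2 ≤ k) {q : MvPolynomial (Fin 2) ℝ}
    (hq : VanishesOnBoundary q) (hq₀ : degreeOf 0 (pderiv 0 q) ≤ k - 1)
    (hq₁ : degreeOf 1 (pderiv 1 q) ≤ k - 1)
    (hmom : ∀ r, degreeOf 0 r ≤ k - 2 → degreeOf 1 r ≤ k - 2 →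
      squareIntegral (pderiv 0 q * (X 0 * r) + pderiv 1 q * (X 1 * r)) = 0) :
    q = 0 := by
  refine eq_zero_of_moments_eq_zero (m := k - 2) hq ?_ ?_ fun s hs₀ hs₁ => ?_
  · have := degreeOf_le_degreeOf_pderiv_add_one 0 q
    omega
  · have := degreeOf_le_degreeOf_pderiv_add_one 1 q
    omega
  · obtain ⟨r, rfl, hr⟩ := exists_divRadial_eq s
    rw [← neg_eq_zero, ← squareIntegral_pderiv_mul_X hq]
    exact hmom r ((hr 0).trans hs₀) ((hr 1).trans hs₁)

end RefSquare

open RefSquare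

/-- Unisolvence of the rectangular `H²(curl)`-conforming element on
`K̂ = (-1,1)²`.  If `û = (û₁, û₂) ∈ Q_{k-1,k} × Q_{k,k-1}` (`k ≥ 3`) has
(i) vanishing tangential component on all four edges, (ii) vanishing curl on `∂K̂`,
(iii) `∫_{K̂} û · (∇̂×φ̂) = 0` for all `φ̂ ∈ Q̃_{k-3}`, and
(iv) `∫_{K̂} û · q̂ = 0` for all `q̂ ∈ Q_{k-2} · x̂`, then `û = 0`. -/
theorem rect_element_unisolvent (k : ℕ) (hk : 3 ≤ k)
    (u1 u2 : MvPolynomial (Fin 2) ℝ)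
    (hu1x : degreeOf 0 u1 ≤ k - 1) (hu1y : degreeOf 1 u1 ≤ k)
    (hu2x : degreeOf 0 u2 ≤ k) (hu2y : degreeOf 1 u2 ≤ k - 1)
    -- (i) tangential component vanishes on the four edges
    (htang : ∀ t ∈ Set.Icc (-1 : ℝ) 1,
      eval ![(-1 : ℝ), t] u2 = 0 ∧ eval ![(1 : ℝ), t] u2 = 0 ∧
      eval ![t, (-1 : ℝ)] u1 = 0 ∧ eval ![t, (1 : ℝ)] u1 = 0)
    -- (ii) the curl `∂₁û₂ - ∂₂û₁` vanishes on the boundary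
    (hcurl : ∀ t ∈ Set.Icc (-1 : ℝ) 1,
      eval ![(-1 : ℝ), t] (pderiv 0 u2 - pderiv 1 u1) = 0 ∧
      eval ![(1 : ℝ), t] (pderiv 0 u2 - pderiv 1 u1) = 0 ∧
      eval ![t, (-1 : ℝ)] (pderiv 0 u2 - pderiv 1 u1) = 0 ∧
      eval ![t, (1 : ℝ)] (pderiv 0 u2 - pderiv 1 u1) = 0)
    -- (iii) moments against `∇̂×φ̂ = (∂₂φ̂, -∂₁φ̂)` for `φ̂ ∈ Q̃_{k-3}`
    (hmomcurl : ∀ φ : MvPolynomial (Fin 2) ℝ,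
      degreeOf 0 φ ≤ k - 3 → degreeOf 1 φ ≤ k - 3 → coeff 0 φ = 0 →
      ∫ x in (-1 : ℝ)..1, ∫ y in (-1 : ℝ)..1,
        (eval ![x, y] u1 * eval ![x, y] (pderiv 1 φ) -
          eval ![x, y] u2 * eval ![x, y] (pderiv 0 φ)) = 0)
    -- (iv) moments against `q̂ = r x̂ = (x̂₁ r, x̂₂ r)` for `r ∈ Q_{k-2}`
    (hmomx : ∀ r : MvPolynomial (Fin 2) ℝ,
      degreeOf 0 r ≤ k - 2 → degreeOf 1 r ≤ k - 2 →
      ∫ x in (-1 : ℝ)..1, ∫ y in (-1 : ℝ)..1,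
        (eval ![x, y] u1 * (x * eval ![x, y] r) +
          eval ![x, y] u2 * (y * eval ![x, y] r)) = 0) :
    u1 = 0 ∧ u2 = 0 := by
  have hu₁ := vanishesOnEdges_one_of_forall_Icc fun t ht => (htang t ht).2.2
  have hu₂ := vanishesOnEdges_zero_of_forall_Icc fun t ht =>
    ⟨(htang t ht).1, (htang t ht).2.1⟩
  have hcurl₀ := curl_eq_zero_of_moments hk hu1x hu1y hu2x hu2y hu₁ hu₂
    (vanishesOnBoundary_of_forall_Icc hcurl) fun φ h₀ h₁ h₂ => by
      simpa [squareIntegral_apply] using hmomcurl φ h₀ h₁ h₂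
  obtain ⟨q, rfl, rfl, hq⟩ :=
    exists_potential_vanishesOnBoundary (sub_eq_zero.1 hcurl₀) hu₁ hu₂
  have : q = 0 := eq_zero_of_gradient_moments (by omega) hq hu1x hu2y fun r h₀ h₁ => by
    simpa [squareIntegral_apply] using hmomx r h₀ h₁
  simp [this]
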